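/- The family of homogeneous modules of a weakly graphic homogeneous relation is partitive: it is weakly partitive and additionally closed under symmetric difference of overlapping members. -/

import Mathlib

/-- `H` is a homogeneous relation: for each `x`, the binary relation
`H x · ·` is an equivalence relation on the elements distinct from `x`. -/
def IsHomRel {X : Type*} (H : X → X → X → Prop) : Prop :=
  (∀ x y, y ≠ x → H x y y) ∧
  (∀ x y z, y ≠ x → z ≠ x → H x y z → H x z y) ∧
  (∀ x y z w, y ≠ x → z ≠ x → w ≠ x → H x y z → H x z w → H x y w)

/-- `M` is a homogeneous module of `H`. -/
def IsModule {X : Type*} (H : X → X → X → Prop) (M : Set X) : Prop :=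
  ∀ m ∈ M, ∀ m' ∈ M, ∀ x ∉ M, H x m m'

/-- Two sets overlap. -/
def Overlap {X : Type*} (A B : Set X) : Prop :=
  (A ∩ B).Nonempty ∧ (A \ B).Nonempty ∧ (B \ A).Nonempty

def WeaklyGraphic {X : Type*} (H : X → X → X → Prop) : Prop :=
  ∀ x y z : X, x ≠ y → x ≠ z → y ≠ z → H y x z → H z x y → H x y z
/-!
The union and intersection of overlapping modules are modules for any homogeneous relation, by
chaining equivalences through a common element. The weakly graphic axiom enters
only through one configuration: for `m ∈ A \ B`, `x ∈ A ∩ B` and `c ∈ B \ A`, module `B` gives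
`H m x c` and module `A` gives `H c x m`, so weak graphicity yields `H x m c`. This makes all of
`A \ B` equivalent to `B \ A` as seen from any `x ∈ A ∩ B`, which is what the differences and the
symmetric difference need.
-/

section

variable {X : Type*} {H : X → X → X → Prop}

namespace IsHomRel

variable {x y z w : X}

theorem refl (hH : IsHomRel H) (hy : y ≠ x) : H x y y := hH.1 x y hy

theorem symm (hH : IsHomRel H) (hy : y ≠ x) (hz : z ≠ x) (h : H x y z) : H x z y :=
  hH.2.1 x y z hy hz h

theorem trans (hH : IsHomRel H) (hy : y ≠ x) (hz : z ≠ x) (hw : w ≠ x) (hyz : H x y z)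
    (hzw : H x z w) : H x y w :=
  hH.2.2 x y z w hy hz hw hyz hzw

end IsHomRel

theorem isModule_univ : IsModule H (Set.univ : Set X) :=
  fun _ _ _ _ x hx => absurd (Set.mem_univ x) hx

theorem isModule_singleton (hH : IsHomRel H) (a : X) : IsModule H {a} := by
  rintro m rfl m' rfl x hx
  exact hH.refl (Ne.symm hx)

namespace IsModule

variable {A B : Set X}

theorem inter (hA : IsModule H A) (hB : IsModule H B) : IsModule H (A ∩ B) := by
  intro m hm m' hm' x hx
  by_cases hxA : x ∈ A
  · exact hB m hm.2 m' hm'.2 x fun hxB => hx ⟨hxA, hxB⟩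
  · exact hA m hm.1 m' hm'.1 x hxA

theorem union (hH : IsHomRel H) (hA : IsModule H A) (hB : IsModule H B)
    (hAB : (A ∩ B).Nonempty) : IsModule H (A ∪ B) := by
  obtain ⟨c, hcA, hcB⟩ := hAB
  intro m hm m' hm' x hx
  simp only [Set.mem_union, not_or] at hm hm' hx
  obtain ⟨hxA, hxB⟩ := hx
  have hne : ∀ {y}, y ∈ A ∨ y ∈ B → y ≠ x := by
    rintro y (hy | hy) rfl
    exacts [hxA hy, hxB hy]
  have through_c : ∀ {y}, y ∈ A ∨ y ∈ B → H x y c := by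
    rintro y (hy | hy)
    exacts [hA y hy c hcA x hxA, hB y hy c hcB x hxB]
  exact hH.trans (hne hm) (hne (.inl hcA)) (hne hm')
    (through_c hm) (hH.symm (hne hm') (hne (.inl hcA)) (through_c hm'))

theorem rel_of_mem_diff_of_mem_inter (hH : IsHomRel H) (hwg : WeaklyGraphic H)
    (hA : IsModule H A) (hB : IsModule H B) {m x c : X}
    (hm : m ∈ A \ B) (hx : x ∈ A ∩ B) (hc : c ∈ B \ A) : H x m c := by
  have hxm : x ≠ m := fun h => hm.2 (h ▸ hx.2)
  have hxc : x ≠ c := fun h => hc.2 (h ▸ hx.1)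
  have hmc : m ≠ c := fun h => hc.2 (h ▸ hm.1)
  have hmxc : H m x c := hB x hx.2 c hc.1 m hm.2
  have hcxm : H c x m := hH.symm hmc hxc (hA m hm.1 x hx.1 c hc.2)
  exact hwg x m c hxm hxc hmc hmxc hcxm

theorem diff (hH : IsHomRel H) (hwg : WeaklyGraphic H) (hA : IsModule H A)
    (hB : IsModule H B) (hBA : (B \ A).Nonempty) : IsModule H (A \ B) := by
  obtain ⟨c, hc⟩ := hBA
  intro m hm m' hm' x hx
  by_cases hxA : x ∈ A
  · have hx : x ∈ A ∩ B := ⟨hxA, not_not.mp fun hxB => hx ⟨hxA, hxB⟩⟩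
    have hm'x : m' ≠ x := fun h => hm'.2 (h ▸ hx.2)
    have hcx : c ≠ x := fun h => hc.2 (h ▸ hx.1)
    exact hH.trans (fun h => hm.2 (h ▸ hx.2)) hcx hm'x
      (rel_of_mem_diff_of_mem_inter hH hwg hA hB hm hx hc)
      (hH.symm hm'x hcx (rel_of_mem_diff_of_mem_inter hH hwg hA hB hm' hx hc))
  · exact hA m hm.1 m' hm'.1 x hxA

theorem symmDiff (hH : IsHomRel H) (hwg : WeaklyGraphic H) (hA : IsModule H A)
    (hB : IsModule H B) (hAB : Overlap A B) : IsModule H (symmDiff A B) := by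
  obtain ⟨hinter, hAnB, hBnA⟩ := hAB
  intro m hm m' hm' x hx
  by_cases hxAB : x ∈ A ∩ B
  · have cross : ∀ {y z}, y ∈ A \ B → z ∈ B \ A → H x y z :=
      fun hy hz => rel_of_mem_diff_of_mem_inter hH hwg hA hB hy hxAB hz
    rcases hm with hm | hm <;> rcases hm' with hm' | hm'
    · exact hA.diff hH hwg hB hBnA m hm m' hm' x fun h => h.2 hxAB.2
    · exact cross hm hm'
    · exact hH.symm (fun h => hm'.2 (h ▸ hxAB.2)) (fun h => hm.2 (h ▸ hxAB.1)) (cross hm' hm)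
    · exact hB.diff hH hwg hA hAnB m hm m' hm' x fun h => h.2 hxAB.1
  · have hxU : x ∉ A ∪ B := fun h => hx (by rw [symmDiff_eq_sup_sdiff_inf]; exact ⟨h, hxAB⟩)
    exact hA.union hH hB hinter m (Set.symmDiff_subset_union hm) m'
      (Set.symmDiff_subset_union hm') x hxU

end IsModule

end

theorem stmt_17_general {X : Type*} (H : X → X → X → Prop)
    (hH : IsHomRel H) (hwg : WeaklyGraphic H) :
    IsModule H (Set.univ : Set X) ∧
    (∀ x : X, IsModule H {x}) ∧
    ∀ A B : Set X, IsModule H A → IsModule H B → Overlap A B →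
      IsModule H (A ∪ B) ∧ IsModule H (A ∩ B) ∧ IsModule H (A \ B) ∧
        IsModule H ((A \ B) ∪ (B \ A)) := by
  refine ⟨isModule_univ, isModule_singleton hH, fun A B hA hB hAB => ?_⟩
  exact ⟨hA.union hH hB hAB.1, hA.inter hB, hA.diff hH hwg hB hAB.2.2,
    hA.symmDiff hH hwg hB hAB⟩

theorem stmt_17 {X : Type*} [Fintype X] (H : X → X → X → Prop)
    (hH : IsHomRel H) (hwg : WeaklyGraphic H) :
    IsModule H (Set.univ : Set X) ∧
    (∀ x : X, IsModule H {x}) ∧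
    ∀ A B : Set X, IsModule H A → IsModule H B → Overlap A B →
      IsModule H (A ∪ B) ∧ IsModule H (A ∩ B) ∧ IsModule H (A \ B) ∧
        IsModule H ((A \ B) ∪ (B \ A)) :=
  stmt_17_general H hH hwg
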